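/- arXiv:1806.10561 — 7 statements merged into one kernel-verified Lean document; each statement's English description precedes it below -/
import Mathlib

section
/- Let φ be a logically separable epistemic term in the multi-agent modal logic K_n. Then φ is satisfiable if and only if every formula in Prop(φ) and every formula in Diam_i(φ) for each agent i is satisfiable. -/
universe u v

inductive Fm (A P : Type) : Type
  | tru : Fm A P
  | var : P → Fm A P
  | neg : Fm A P → Fm A P
  | and : Fm A P → Fm A P → Fm A P
  | box : A → Fm A P → Fm A P

namespace Fm
variable {A P : Type}
def or (φ ψ : Fm A P) : Fm A P := neg ((neg φ).and (neg ψ))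
def bot : Fm A P := neg tru
def dia (i : A) (φ : Fm A P) : Fm A P := neg (box i (neg φ))
end Fm

structure KM (A P : Type) where
  S : Type
  R : A → S → S → Prop
  V : S → P → Prop

variable {A P : Type}

def Sat (M : KM A P) : M.S → Fm A P → Prop
  | _, .tru => True
  | s, .var p => M.V s p
  | s, .neg φ => ¬ Sat M s φ
  | s, .and φ ψ => Sat M s φ ∧ Sat M s ψ
  | s, .box i φ => ∀ t, M.R i s t → Sat M t φ

def Satisfiable (φ : Fm A P) : Prop := ∃ (M : KM A P) (s : M.S), Sat M s φ

def Entails (φ ψ : Fm A P) : Prop := ∀ (M : KM A P) (s : M.S), Sat M s φ → Sat M s ψ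

def FEquiv (φ ψ : Fm A P) : Prop := Entails φ ψ ∧ Entails ψ φ

def IsProp : Fm A P → Prop
  | .tru => True
  | .var _ => True
  | .neg φ => IsProp φ
  | .and φ ψ => IsProp φ ∧ IsProp ψ
  | .box _ _ => False

def Basic (φ : Fm A P) : Prop :=
  IsProp φ ∨ (∃ i ψ, φ = Fm.box i ψ) ∨ (∃ i ψ, φ = Fm.dia i ψ)

def conj : List (Fm A P) → Fm A P
  | [] => Fm.tru
  | φ :: L => φ.and (conj L)

def disj : List (Fm A P) → Fm A P
  | [] => Fm.bot
  | φ :: L => φ.or (disj L)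

def EpTerm (L : List (Fm A P)) : Prop := ∀ c ∈ L, Basic c

def LogSep (L : List (Fm A P)) : Prop :=
  ∀ η : Fm A P, Basic η → Entails (conj L) η → ∃ α ∈ L, Entails α η

def fvars : Fm A P → Set P
  | .tru => ∅
  | .var p => {p}
  | .neg φ => fvars φ
  | .and φ ψ => fvars φ ∪ fvars ψ
  | .box _ φ => fvars φ

def fsize : Fm A P → ℕ
  | .tru => 1
  | .var _ => 1
  | .neg φ => fsize φ + 1
  | .and φ ψ => fsize φ + fsize ψ + 1
  | .box _ φ => fsize φ + 1

lemma sat_conj_mem {M : KM A P} {s : M.S} :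
    ∀ {L : List (Fm A P)}, Sat M s (conj L) → ∀ α ∈ L, Sat M s α := by
  intro L
  induction L with
  | nil => intro _ α hα; cases hα
  | cons φ L ih =>
    intro h α hα
    rcases List.mem_cons.mp hα with rfl | h2
    · exact h.1
    · exact ih h.2 _ h2

def extend (M : KM A P) (i : A) (s : M.S) : KM A P where
  S := Option M.S
  R := fun j x y =>
    (x = none ∧ j = i ∧ y = some s) ∨ (∃ a b, M.R j a b ∧ x = some a ∧ y = some b)
  V := fun x p => ∃ t, x = some t ∧ M.V t p

lemma sat_extend {M : KM A P} {i : A} {s : M.S} :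
    ∀ (φ : Fm A P) (t : M.S), Sat (extend M i s) (some t) φ ↔ Sat M t φ := by
  intro φ
  induction φ with
  | tru => intro t; simp [Sat]
  | var p => intro t; simp [Sat, extend]
  | neg φ ih => intro t; simp only [Sat]; rw [ih]
  | and φ ψ ih1 ih2 => intro t; simp only [Sat]; rw [ih1, ih2]
  | box j φ ih =>
    intro t
    constructor
    · intro h u hr
      exact (ih u).mp (h (some u) (Or.inr ⟨t, u, hr, rfl, rfl⟩))
    · intro h u hr
      rcases hr with ⟨hx, _, _⟩ | ⟨a, b, hab, ha, hb⟩
      · exact absurd hx (by simp)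
      · subst hb
        injection ha with ha'
        subst ha'
        exact (ih b).mpr (h b hab)

theorem logically_separable_term_satisfiability
    (L : List (Fm A P)) (hterm : EpTerm L) (hsep : LogSep L) :
    Satisfiable (conj L) ↔
      ((∀ α ∈ L, IsProp α → Satisfiable α) ∧
       (∀ (i : A) (γ : Fm A P), Fm.dia i γ ∈ L → Satisfiable γ)) := by
  constructor
  · rintro ⟨M, s, hs⟩
    constructor
    · intro α hα _
      exact ⟨M, s, sat_conj_mem hs α hα⟩
    · intro i γ hγ
      have h := sat_conj_mem hs _ hγ
      simp only [Fm.dia, Sat] at h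
      push_neg at h
      obtain ⟨t, _, ht⟩ := h
      exact ⟨M, t, ht⟩
  · rintro ⟨h1, h2⟩
    by_contra hns
    have hent : Entails (conj L) Fm.bot := by
      intro M s hs
      exact absurd ⟨M, s, hs⟩ hns
    have hbasic : Basic (Fm.bot (A := A) (P := P)) := Or.inl (by trivial)
    obtain ⟨α, hαL, hα⟩ := hsep Fm.bot hbasic hent
    have hunsat : ¬ Satisfiable α := by
      rintro ⟨M, s, hs⟩
      have := hα M s hs
      simp [Sat, Fm.bot] at this
    rcases hterm α hαL with hp | ⟨i, ψ, rfl⟩ | ⟨i, γ, rfl⟩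
    · exact hunsat (h1 α hαL hp)
    · apply hunsat
      refine ⟨⟨Unit, fun _ _ _ => False, fun _ _ => False⟩, ⟨⟩, ?_⟩
      intro t ht
      exact ht.elim
    · obtain ⟨M, s, hγ⟩ := h2 i γ hαL
      apply hunsat
      refine ⟨extend M i s, none, ?_⟩
      simp only [Fm.dia, Sat]
      intro hall
      exact hall (some s) (Or.inl ⟨rfl, rfl, rfl⟩) ((sat_extend γ s).mpr hγ)
end

section
/- Let φ be a satisfiable logically separable epistemic term in K_n. Then for every propositional formula α', φ ⊨ α' if and only if there exists α ∈ Prop(φ) with α ⊨ α'. -/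
universe u v

variable {A P : Type}

lemma sat_conj_iff (M : KM A P) (s : M.S) :
    ∀ L : List (Fm A P), Sat M s (conj L) ↔ ∀ c ∈ L, Sat M s c
  | [] => by simp [conj, Sat]
  | φ :: L => by
      simp [conj, Sat, sat_conj_iff M s L]

lemma entails_conj_mem {L : List (Fm A P)} {α : Fm A P} (h : α ∈ L) :
    Entails (conj L) α := by
  intro M s hs
  exact (sat_conj_iff M s L).mp hs α h

lemma prop_sat_iff {φ : Fm A P} (h : IsProp φ) (M N : KM A P) (s : M.S) (t : N.S)
    (hV : ∀ p, M.V s p ↔ N.V t p) : Sat M s φ ↔ Sat N t φ := by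
  induction φ with
  | tru => simp [Sat]
  | var p => simpa [Sat] using hV p
  | neg φ ih => simp [Sat, ih h]
  | and φ ψ ihφ ihψ => simp [Sat, ihφ h.1, ihψ h.2]
  | box i φ ih => exact absurd h (by simp [IsProp])

lemma sat_hom (M N : KM A P) (f : M.S → N.S)
    (hV : ∀ s p, M.V s p ↔ N.V (f s) p)
    (hforth : ∀ i s t, M.R i s t → N.R i (f s) (f t))
    (hback : ∀ i s u, N.R i (f s) u → ∃ t, M.R i s t ∧ u = f t) :
    ∀ (φ : Fm A P) (s : M.S), Sat M s φ ↔ Sat N (f s) φ := by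
  intro φ
  induction φ with
  | tru => simp [Sat]
  | var p => intro s; simpa [Sat] using hV s p
  | neg φ ih => intro s; simp [Sat, ih s]
  | and φ ψ ihφ ihψ => intro s; simp [Sat, ihφ s, ihψ s]
  | box i φ ih =>
      intro s
      constructor
      · intro h u hu
        obtain ⟨t, ht, rfl⟩ := hback i s u hu
        exact (ih t).mp (h t ht)
      · intro h t ht
        exact (ih t).mpr (h (f t) (hforth i s t ht))

lemma entails_tru_of_box {i : A} {ψ α' : Fm A P} (hα' : IsProp α')
    (h : Entails (Fm.box i ψ) α') : Entails Fm.tru α' := by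
  intro M s _
  let N : KM A P := ⟨M.S, fun _ _ _ => False, M.V⟩
  have hbox : Sat N s (Fm.box i ψ) := by intro t ht; exact ht.elim
  have := h N s hbox
  exact (prop_sat_iff hα' N M s s (fun p => Iff.rfl)).mp this

lemma entails_tru_of_dia {i : A} {ψ α' : Fm A P} (hα' : IsProp α')
    (h : Entails (Fm.dia i ψ) α')
    (hsatψ : ∃ (M0 : KM A P) (t0 : M0.S), Sat M0 t0 ψ) : Entails Fm.tru α' := by
  obtain ⟨M0, t0, ht0⟩ := hsatψ
  intro M s _
  let N : KM A P := ⟨M0.S ⊕ PUnit,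
    fun j x y => match x, y with
      | .inl a, .inl b => M0.R j a b
      | .inr _, .inl b => j = i ∧ b = t0
      | _, .inr _ => False,
    fun x p => match x with
      | .inl a => M0.V a p
      | .inr _ => M.V s p⟩
  have hhom : ∀ (φ : Fm A P) (x : M0.S), Sat M0 x φ ↔ Sat N (.inl x) φ := by
    apply sat_hom M0 N Sum.inl
    · intro _ _; exact Iff.rfl
    · intro _ _ _ h; exact h
    · intro j x u hu
      cases u with
      | inl b => exact ⟨b, hu, rfl⟩
      | inr b => exact hu.elim
  have hdia : Sat N (.inr PUnit.unit) (Fm.dia i ψ) := by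
    intro hall
    exact hall (.inl t0) ⟨rfl, rfl⟩ ((hhom ψ t0).mp ht0)
  have := h N (.inr PUnit.unit) hdia
  exact (prop_sat_iff hα' N M (.inr PUnit.unit) s (fun p => Iff.rfl)).mp this

theorem logically_separable_term_prop_entailment
    (L : List (Fm A P)) (hterm : EpTerm L) (hsep : LogSep L)
    (hsat : Satisfiable (conj L)) (α' : Fm A P) (hα' : IsProp α') :
    Entails (conj L) α' ↔
      ((∃ α ∈ L, IsProp α ∧ Entails α α') ∨
       ((¬ ∃ α ∈ L, IsProp α) ∧ Entails Fm.tru α')) := by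
  constructor
  · intro hE
    obtain ⟨α, hαL, hαE⟩ := hsep α' (Or.inl hα') hE
    have htru_case : Entails Fm.tru α' →
        ((∃ α ∈ L, IsProp α ∧ Entails α α') ∨
         ((¬ ∃ α ∈ L, IsProp α) ∧ Entails Fm.tru α')) := by
      intro htru
      by_cases hp : ∃ β ∈ L, IsProp β
      · obtain ⟨β, hβL, hβp⟩ := hp
        exact Or.inl ⟨β, hβL, hβp, fun M s _ => htru M s trivial⟩
      · exact Or.inr ⟨hp, htru⟩
    rcases hterm α hαL with hp | ⟨i, ψ, rfl⟩ | ⟨i, ψ, rfl⟩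
    · exact Or.inl ⟨α, hαL, hp, hαE⟩
    · exact htru_case (entails_tru_of_box hα' hαE)
    · refine htru_case (entails_tru_of_dia hα' hαE ?_)
      obtain ⟨M0, s0, hs0⟩ := hsat
      have hd : Sat M0 s0 (Fm.dia i ψ) := (sat_conj_iff M0 s0 L).mp hs0 _ hαL
      simp only [Fm.dia, Sat, not_forall] at hd
      obtain ⟨t0, ht0, htψ⟩ := hd
      exact ⟨M0, t0, not_not.mp htψ⟩
  · rintro (⟨α, hαL, _, hαE⟩ | ⟨_, htru⟩)
    · exact fun M s hs => hαE M s (entails_conj_mem hαL M s hs)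
    · exact fun M s _ => htru M s trivial
end

section
/- Let φ be a satisfiable logically separable epistemic term in K_n, i an agent, and γ' a formula. Then φ ⊨ ◇_i γ' if and only if there exists γ ∈ Diam_i(φ) with γ ⊨ γ'. -/
universe u v

variable {A P : Type}

lemma sat_conj {M : KM A P} {s : M.S} {L : List (Fm A P)} :
    Sat M s (conj L) ↔ ∀ φ ∈ L, Sat M s φ := by
  induction L with
  | nil => simp [conj, Sat]
  | cons a l ih => simp [conj, Sat, ih]

lemma sat_prop {M N : KM A P} {s : M.S} {t : N.S}
    (hV : ∀ p, M.V s p ↔ N.V t p) :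
    ∀ {ψ : Fm A P}, IsProp ψ → (Sat M s ψ ↔ Sat N t ψ)
  | .tru, _ => Iff.rfl
  | .var p, _ => hV p
  | .neg φ, h => by
      have := sat_prop hV (ψ := φ) h
      simp only [Sat]; rw [this]
  | .and φ χ, h => by
      have h1 := sat_prop hV (ψ := φ) h.1
      have h2 := sat_prop hV (ψ := χ) h.2
      simp only [Sat]; rw [h1, h2]

def rootM (N : KM A P) (i : A) (u : N.S) : KM A P where
  S := Option N.S
  R := fun j s t => match s, t with
    | some a, some b => N.R j a b
    | none, some b => j = i ∧ b = u
    | _, none => False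
  V := fun s p => match s with
    | some a => N.V a p
    | none => False

lemma sat_rootM (N : KM A P) (i : A) (u : N.S) :
    ∀ (ψ : Fm A P) (a : N.S), Sat (rootM N i u) (some a) ψ ↔ Sat N a ψ
  | .tru, a => Iff.rfl
  | .var p, a => Iff.rfl
  | .neg φ, a => by
      have := sat_rootM N i u φ a
      simp only [Sat]; rw [this]
  | .and φ χ, a => by
      have h1 := sat_rootM N i u φ a
      have h2 := sat_rootM N i u χ a
      simp only [Sat]; rw [h1, h2]
  | .box j φ, a => by
      constructor
      · intro h t hr
        exact (sat_rootM N i u φ t).mp (h (some t) hr)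
      · intro h t hr
        match t with
        | some b => exact (sat_rootM N i u φ b).mpr (h b hr)
        | none => exact hr.elim

theorem logically_separable_term_dia_entailment
    (L : List (Fm A P)) (hterm : EpTerm L) (hsep : LogSep L)
    (hsat : Satisfiable (conj L)) (i : A) (γ' : Fm A P) :
    Entails (conj L) (Fm.dia i γ') ↔
      ∃ γ : Fm A P, Fm.dia i γ ∈ L ∧ Entails γ γ' := by
  constructor
  · intro hent
    have hbasic : Basic (Fm.dia i γ') := Or.inr (Or.inr ⟨i, γ', rfl⟩)
    obtain ⟨α, hαL, hα⟩ := hsep _ hbasic hent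
    obtain ⟨M, s, hs⟩ := hsat
    have hsα : Sat M s α := (sat_conj.mp hs) α hαL
    rcases hterm α hαL with hp | ⟨j, ψ, rfl⟩ | ⟨j, γ, rfl⟩
    · exfalso
      let M1 : KM A P := ⟨Unit, fun _ _ _ => False, fun _ p => M.V s p⟩
      have h1 : Sat M1 () α := (sat_prop (M := M) (N := M1) (s := s) (t := ()) (fun _ => Iff.rfl) hp).mp hsα
      have h2 : Sat M1 () (Fm.dia i γ') := hα M1 () h1
      exact h2 (fun t ht => ht.elim)
    · exfalso
      let M1 : KM A P := ⟨Unit, fun _ _ _ => False, fun _ p => M.V s p⟩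
      have h1 : Sat M1 () (Fm.box j ψ) := fun t ht => ht.elim
      have h2 : Sat M1 () (Fm.dia i γ') := hα M1 () h1
      exact h2 (fun t ht => ht.elim)
    · have key : ∀ (N : KM A P) (u : N.S), Sat N u γ → i = j ∧ Sat N u γ' := by
        intro N u hu
        have hroot : Sat (rootM N j u) none (Fm.dia j γ) := by
          intro hall
          exact hall (some u) ⟨rfl, rfl⟩ ((sat_rootM N j u γ u).mpr hu)
        have h2 : ¬ ∀ t, (rootM N j u).R i none t → ¬ Sat (rootM N j u) t γ' :=
          hα _ _ hroot
        rcases not_forall.mp h2 with ⟨t, ht⟩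
        rcases Classical.not_imp.mp ht with ⟨hr, hsat'⟩
        match t, hr, hsat' with
        | some b, hr, hsat' =>
          have hr' : i = j ∧ b = u := hr
          obtain ⟨hij, hbu⟩ := hr'
          rw [hbu] at hsat'
          exact ⟨hij, (sat_rootM N j u γ' u).mp (not_not.mp hsat')⟩
      have h2 : ¬ ∀ t, M.R j s t → ¬ Sat M t γ := hsα
      rcases not_forall.mp h2 with ⟨t, ht⟩
      rcases Classical.not_imp.mp ht with ⟨hr, hsat'⟩
      have hij : i = j := (key M t (not_not.mp hsat')).1
      refine ⟨γ, ?_, ?_⟩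
      · rw [hij]; exact hαL
      · exact fun N u hu => (key N u hu).2
  · rintro ⟨γ, hmem, hent⟩ M s hs
    have hd : Sat M s (Fm.dia i γ) := (sat_conj.mp hs) _ hmem
    intro hall
    exact hd (fun t hr hγ => hall t hr (hent M t hγ))
end

section
/- Let ψ = α ∧ ⋀_{i∈B}(□_i β_i ∧ ⋀_{j=1}^{m_i} ◇_i γ_{ij}) and ψ' = α' ∧ ⋀_{i∈B}(□_i β'_i ∧ ⋀_{j=1}^{m'_i} ◇_i γ'_{ij}) be separability-based terms. Then ψ ∧ ψ' is logically equivalent in K_n to the separability-based term α'' ∧ ⋀_{i∈B}(□_i β''_i ∧ ⋀_{j=1}^{m_i} ◇_i(β'_i ∧ γ_{ij}) ∧ ⋀_{j=1}^{m'_i} ◇_i(β_i ∧ γ'_{ij})), where α'' ≡ α ∧ α' and β''_i ≡ β_i ∧ β'_i. -/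
universe u v

variable {A P : Type}

/-! Agent by agent: □_i distributes over ∧, and in the presence of □_i β' every witness of
◇_i γ already satisfies β', so ◇_i γ and ◇_i (β' ∧ γ) hold at the same worlds. -/

lemma sat_and (M : KM A P) (s : M.S) (φ ψ : Fm A P) :
    Sat M s (φ.and ψ) ↔ Sat M s φ ∧ Sat M s ψ :=
  Iff.rfl

lemma sat_conj_map {ι : Type*} (M : KM A P) (s : M.S) (f : ι → Fm A P) (L : List ι) :
    Sat M s (conj (L.map f)) ↔ ∀ x ∈ L, Sat M s (f x) := by
  induction L with
  | nil => simp [conj, Sat]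
  | cons a L ih => simp [conj, Sat, ih]

lemma sat_dia (M : KM A P) (s : M.S) (i : A) (φ : Fm A P) :
    Sat M s (Fm.dia i φ) ↔ ∃ t, M.R i s t ∧ Sat M t φ := by
  simp [Fm.dia, Sat]

lemma FEquiv.sat_iff {φ ψ : Fm A P} (h : FEquiv φ ψ) (M : KM A P) (s : M.S) :
    Sat M s φ ↔ Sat M s ψ :=
  ⟨h.1 M s, h.2 M s⟩

lemma fequiv_of_sat_iff {φ ψ : Fm A P} (h : ∀ (M : KM A P) (s : M.S), Sat M s φ ↔ Sat M s ψ) :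
    FEquiv φ ψ :=
  ⟨fun M s => (h M s).1, fun M s => (h M s).2⟩

lemma sat_box_iff_of_fequiv_and {M : KM A P} {s : M.S} {i : A} {β β' β'' : Fm A P}
    (h : FEquiv β'' (β.and β')) :
    Sat M s (Fm.box i β'') ↔ Sat M s (Fm.box i β) ∧ Sat M s (Fm.box i β') := by
  simp only [Sat, h.sat_iff, imp_and, forall_and]

lemma sat_dia_and_iff_of_sat_box {M : KM A P} {s : M.S} {i : A} {β : Fm A P} (φ : Fm A P)
    (hβ : Sat M s (Fm.box i β)) :
    Sat M s (Fm.dia i (β.and φ)) ↔ Sat M s (Fm.dia i φ) := by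
  simp only [sat_dia]
  exact exists_congr fun t => and_congr_right fun ht => and_iff_right (hβ t ht)

lemma sat_conj_dia_and_iff_of_sat_box {M : KM A P} {s : M.S} {i : A} {β : Fm A P}
    (L : List (Fm A P)) (hβ : Sat M s (Fm.box i β)) :
    Sat M s (conj (L.map fun φ => Fm.dia i (β.and φ))) ↔ Sat M s (conj (L.map (Fm.dia i))) := by
  simp only [sat_conj_map, sat_dia_and_iff_of_sat_box _ hβ]

lemma sat_box_conj_dia_and_iff {M : KM A P} {s : M.S} {i : A} {β β' β'' : Fm A P}
    (L L' : List (Fm A P)) (h : FEquiv β'' (β.and β')) :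
    Sat M s ((Fm.box i β).and (conj (L.map (Fm.dia i)))) ∧
        Sat M s ((Fm.box i β').and (conj (L'.map (Fm.dia i)))) ↔
      Sat M s ((Fm.box i β'').and ((conj (L.map fun φ => Fm.dia i (β'.and φ))).and
        (conj (L'.map fun φ => Fm.dia i (β.and φ))))) := by
  simp only [sat_and, sat_box_iff_of_fequiv_and h]
  constructor
  · rintro ⟨⟨hβ, hL⟩, hβ', hL'⟩
    exact ⟨⟨hβ, hβ'⟩, (sat_conj_dia_and_iff_of_sat_box L hβ').2 hL,
      (sat_conj_dia_and_iff_of_sat_box L' hβ).2 hL'⟩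
  · rintro ⟨⟨hβ, hβ'⟩, hL, hL'⟩
    exact ⟨⟨hβ, (sat_conj_dia_and_iff_of_sat_box L hβ').1 hL⟩, hβ',
      (sat_conj_dia_and_iff_of_sat_box L' hβ).1 hL'⟩

theorem ste_bounded_conjunction_general
    (B : List A) (α α' : Fm A P) (β β' : A → Fm A P) (γ γ' : A → List (Fm A P))
    (hγ : ∀ i ∈ B, ∀ g ∈ γ i, Entails g (β i))
    (hγ' : ∀ i ∈ B, ∀ g ∈ γ' i, Entails g (β' i))
    (α'' : Fm A P) (β'' : A → Fm A P)
    (hα'' : FEquiv α'' (α.and α'))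
    (hβ'' : ∀ i ∈ B, FEquiv (β'' i) ((β i).and (β' i))) :
    let ψ : Fm A P :=
      α.and (conj (B.map fun i => (Fm.box i (β i)).and (conj ((γ i).map (Fm.dia i)))))
    let ψ' : Fm A P :=
      α'.and (conj (B.map fun i => (Fm.box i (β' i)).and (conj ((γ' i).map (Fm.dia i)))))
    let ψ'' : Fm A P :=
      α''.and (conj (B.map fun i => (Fm.box i (β'' i)).and
        ((conj ((γ i).map fun g => Fm.dia i ((β' i).and g))).and
         (conj ((γ' i).map fun g => Fm.dia i ((β i).and g))))))
    FEquiv (ψ.and ψ') ψ'' ∧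
    (∀ i ∈ B, ∀ g ∈ γ i, Entails ((β' i).and g) ((β i).and (β' i))) ∧
    (∀ i ∈ B, ∀ g ∈ γ' i, Entails ((β i).and g) ((β i).and (β' i))) := by
  refine ⟨fequiv_of_sat_iff fun M s => ?_, fun i hi g hg M s h => ⟨hγ i hi g hg M s h.2, h.1⟩,
    fun i hi g hg M s h => ⟨h.1, hγ' i hi g hg M s h.2⟩⟩
  change (_ ∧ _) ∧ (_ ∧ _) ↔ _ ∧ _
  rw [hα''.sat_iff, sat_conj_map, sat_conj_map, sat_conj_map, and_and_and_comm, ← forall₂_and]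
  exact and_congr_right fun _ =>
    forall₂_congr fun i hi => sat_box_conj_dia_and_iff (γ i) (γ' i) (hβ'' i hi)

theorem ste_bounded_conjunction
    (B : List A) (α α' : Fm A P) (β β' : A → Fm A P) (γ γ' : A → List (Fm A P))
    (hα : IsProp α) (hα' : IsProp α')
    (hγ : ∀ i ∈ B, ∀ g ∈ γ i, Entails g (β i))
    (hγ' : ∀ i ∈ B, ∀ g ∈ γ' i, Entails g (β' i))
    (α'' : Fm A P) (β'' : A → Fm A P)
    (hα'' : FEquiv α'' (α.and α'))
    (hβ'' : ∀ i ∈ B, FEquiv (β'' i) ((β i).and (β' i))) :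
    let ψ : Fm A P :=
      α.and (conj (B.map fun i => (Fm.box i (β i)).and (conj ((γ i).map (Fm.dia i)))))
    let ψ' : Fm A P :=
      α'.and (conj (B.map fun i => (Fm.box i (β' i)).and (conj ((γ' i).map (Fm.dia i)))))
    let ψ'' : Fm A P :=
      α''.and (conj (B.map fun i => (Fm.box i (β'' i)).and
        ((conj ((γ i).map fun g => Fm.dia i ((β' i).and g))).and
         (conj ((γ' i).map fun g => Fm.dia i ((β i).and g))))))
    FEquiv (ψ.and ψ') ψ'' ∧
    (∀ i ∈ B, ∀ g ∈ γ i, Entails ((β' i).and g) ((β i).and (β' i))) ∧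
    (∀ i ∈ B, ∀ g ∈ γ' i, Entails ((β i).and g) ((β i).and (β' i))) :=
  ste_bounded_conjunction_general B α α' β β' γ γ' hγ hγ' α'' β'' hα'' hβ''
end

section
/- In K45_n, the equivalence □_i(φ ∨ (□_i ψ ∧ η)) ↔ (□_i φ ∨ □_i ψ) ∧ □_i(φ ∨ η) is valid. -/
universe u v

variable {A P : Type}

/-- The model is a `K45ₙ` model: every accessibility relation is transitive and Euclidean. -/
def TransEuc (M : KM A P) : Prop :=
  ∀ i : A, (∀ s t u : M.S, M.R i s t → M.R i t u → M.R i s u) ∧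
           (∀ s t u : M.S, M.R i s t → M.R i s u → M.R i t u)

theorem k45_box_or_box_distribution (φ ψ η : Fm A P) (i : A) :
    ∀ M : KM A P, TransEuc M → ∀ s : M.S,
      Sat M s (Fm.box i (φ.or ((Fm.box i ψ).and η))) ↔
      Sat M s (((Fm.box i φ).or (Fm.box i ψ)).and (Fm.box i (φ.or η))) := by
  intro M hM s
  obtain ⟨htr, heu⟩ := hM i
  simp only [Sat, Fm.or]
  constructor
  · intro h
    constructor
    · by_cases hφ : ∀ t, M.R i s t → Sat M t φ
      · intro hc; exact hc.1 hφ
      · push_neg at hφ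
        obtain ⟨t, hst, htφ⟩ := hφ
        have := h t hst
        intro hc
        apply hc.2
        intro u hsu
        have htu := heu s t u hst hsu
        rcases not_and_or.mp this with h1 | h2
        · exact absurd (not_not.mp h1) htφ
        · exact (not_not.mp h2).1 u htu
    · intro t hst
      rcases not_and_or.mp (h t hst) with h1 | h2
      · intro hc; exact hc.1 (not_not.mp h1)
      · intro hc; exact hc.2 (not_not.mp h2).2
  · rintro ⟨h1, h2⟩ t hst hc
    rcases not_and_or.mp h1 with hbφ | hbψ
    · exact hc.1 (not_not.mp hbφ t hst)
    · apply hc.2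
      constructor
      · intro u htu
        exact (not_not.mp hbψ) u (htr s t u hst htu)
      · rcases not_and_or.mp (h2 t hst) with ha | hb
        · exact absurd (not_not.mp ha) (fun x => hc.1 x)
        · exact not_not.mp hb
end

section
/- In K45_n, the equivalence □_i(φ ∧ (□_i ψ ∨ η)) ↔ □_i φ ∧ (□_i ψ ∨ □_i η) is valid. -/
universe u v

variable {A P : Type}

theorem k45_box_and_box_distribution (φ ψ η : Fm A P) (i : A) :
    ∀ M : KM A P, TransEuc M → ∀ s : M.S,
      Sat M s (Fm.box i (φ.and ((Fm.box i ψ).or η))) ↔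
      Sat M s ((Fm.box i φ).and ((Fm.box i ψ).or (Fm.box i η))) := by
  intro M hTE s
  obtain ⟨htrans, heuc⟩ := hTE i
  simp only [Sat, Fm.or, not_and, not_not]
  constructor
  · intro h
    refine ⟨fun t hst => (h t hst).1, ?_⟩
    intro hnbψ
    -- □ψ fails at s, show □η at s
    push_neg at hnbψ
    obtain ⟨t0, hst0, hnψ⟩ := hnbψ
    intro t hst
    have hthis := (h t hst).2
    by_contra hnη
    have hbψ : ∀ u, M.R i t u → Sat M u ψ := by
      by_contra hc
      exact hnη (hthis hc)
    exact hnψ (hbψ t0 (heuc s t t0 hst hst0))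
  · intro ⟨hbφ, hor⟩ t hst
    refine ⟨hbφ t hst, ?_⟩
    intro hnbψ
    by_cases hbψ : ∀ u, M.R i s u → Sat M u ψ
    · push_neg at hnbψ
      obtain ⟨u, htu, hnψ⟩ := hnbψ
      exact absurd (hbψ u (htrans s t u hst htu)) hnψ
    · exact hor hbψ t hst
end

section
/- In K45_n, the equivalence □_i(φ ∧ (◇_i ψ ∨ η)) ↔ □_i φ ∧ (□_i η ∨ ◇_i ψ) is valid. -/
universe u v

variable {A P : Type}

theorem k45_box_and_dia_distribution (φ ψ η : Fm A P) (i : A) :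
    ∀ M : KM A P, TransEuc M → ∀ s : M.S,
      Sat M s (Fm.box i (φ.and ((Fm.dia i ψ).or η))) ↔
      Sat M s ((Fm.box i φ).and ((Fm.box i η).or (Fm.dia i ψ))) := by
  intro M hTE s
  obtain ⟨htr, heu⟩ := hTE i
  simp only [Sat, Fm.or, Fm.dia, not_and, not_not, not_forall]
  constructor
  · intro h
    refine ⟨fun t ht => (h t ht).1, ?_⟩
    rintro ⟨t, ht, hnη⟩
    by_contra hnψ
    push_neg at hnψ
    exact hnη ((h t ht).2 (fun ⟨u, hu, hψu⟩ => hnψ u (htr s t u ht hu) hψu))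
  · rintro ⟨hφ, h2⟩ t ht
    refine ⟨hφ t ht, fun hnd => ?_⟩
    by_contra hnη
    obtain ⟨u, hu, hψ⟩ := h2 ⟨t, ht, hnη⟩
    exact hnd ⟨u, heu s t u ht hu, hψ⟩
end
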